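/- The Franel generating series h = Σ_{n≥0} F_n xⁿ satisfies the differential equation x(x+1)(8x-1)h'' + (24x² + 14x - 1)h' + (8x+2)h = 0, as formal power series over ℚ. -/

import Mathlib

/-!
The `x^(n + 1)` coefficient of the differential operator applied to `Σ aₙ xⁿ` is
`8 (n + 1)² aₙ + (7n² + 21n + 16) aₙ₊₁ - (n + 2)² aₙ₊₂`, and its constant coefficient is
`2 a₀ - a₁`. So the equation is Franel's recurrence
`(n + 2)² F(n + 2) = (7n² + 21n + 16) F(n + 1) + 8 (n + 1)² F(n)` together with `F(1) = 2 F(0)`.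
The recurrence is proved by Zeilberger's method: the corresponding combination of
`C(n + 2, k)³`, `C(n + 1, k)³`, `C(n, k)³` is the difference in `k` of an explicit certificate,
so its sum over `k` telescopes.
-/

open Finset PowerSeries

noncomputable def franel (n : ℕ) : ℚ :=
  ∑ k ∈ range (n + 1), (n.choose k : ℚ) ^ 3

lemma franel_eq_sum_range {n m : ℕ} (hnm : n + 1 ≤ m) :
    franel n = ∑ k ∈ range m, (n.choose k : ℚ) ^ 3 := by
  refine sum_subset (range_subset_range.2 hnm) fun k _ hk => ?_
  rw [Nat.choose_eq_zero_of_lt (by simpa using hk)]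
  simp

lemma succ_mul_choose_succ_eq {R : Type*} [CommRing R] (n k : ℕ) :
    ((k : R) + 1) * n.choose (k + 1) = ((n : R) - k) * n.choose k := by
  rcases le_or_gt k n with hkn | hnk
  · have h := congrArg (Nat.cast : ℕ → R) (Nat.choose_succ_right_eq n k)
    push_cast [hkn] at h
    linear_combination h
  · simp [Nat.choose_eq_zero_of_lt hnk, Nat.choose_eq_zero_of_lt (hnk.trans (Nat.lt_succ_self k))]

noncomputable def franelSummand (n k : ℕ) : ℚ :=
  ((n : ℚ) + 2) ^ 2 * ((n + 2).choose k : ℚ) ^ 3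
    - (7 * (n : ℚ) ^ 2 + 21 * n + 16) * ((n + 1).choose k : ℚ) ^ 3
    - 8 * ((n : ℚ) + 1) ^ 2 * (n.choose k : ℚ) ^ 3

/-- The certificate found by Zeilberger's algorithm for `franelSummand`. -/
noncomputable def franelCertificate (n k : ℕ) : ℚ :=
  -((k : ℚ) + 2) ^ 2 * (n.choose k : ℚ) ^ 3
    - (8 * (k : ℚ) ^ 2 + 27 * k + 22) * (n.choose k : ℚ) ^ 2 * (n.choose (k + 1) : ℚ)
    - (28 * (k : ℚ) ^ 2 + 77 * k + 52) * (n.choose k : ℚ) * (n.choose (k + 1) : ℚ) ^ 2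
    - (14 * (n : ℚ) ^ 2 + 15 * (n : ℚ) * k + 48 * n + 21 * (k : ℚ) ^ 2 + 69 * k + 68)
        * (n.choose (k + 1) : ℚ) ^ 3

lemma franelSummand_add_two (n k : ℕ) :
    franelSummand n (k + 2) = franelCertificate n (k + 1) - franelCertificate n k := by
  have hk₁ : (k : ℚ) + 1 ≠ 0 := by positivity
  have hk₂ : (k : ℚ) + 2 ≠ 0 := by positivity
  have h₁ : (n.choose (k + 1) : ℚ) = ((n : ℚ) - k) / ((k : ℚ) + 1) * n.choose k := by
    rw [div_mul_eq_mul_div, eq_div_iff hk₁, mul_comm, succ_mul_choose_succ_eq]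
  have h₂ : (n.choose (k + 2) : ℚ) = ((n : ℚ) - k - 1) / ((k : ℚ) + 2) * n.choose (k + 1) := by
    rw [div_mul_eq_mul_div, eq_div_iff hk₂, mul_comm]
    have := succ_mul_choose_succ_eq (R := ℚ) n (k + 1)
    push_cast at this
    linear_combination this
  have pascal₁ : ((n + 1).choose (k + 2) : ℚ) = n.choose (k + 1) + n.choose (k + 2) := by
    exact_mod_cast Nat.choose_succ_succ' n (k + 1)
  have pascal₂ :
      ((n + 2).choose (k + 2) : ℚ) = n.choose k + 2 * n.choose (k + 1) + n.choose (k + 2) := by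
    rw [Nat.choose_succ_succ', Nat.choose_succ_succ', Nat.choose_succ_succ' n (k + 1)]
    push_cast
    ring
  -- everything is now a rational function of `n`, `k` and `C(n, k)`
  rw [franelSummand, franelCertificate, franelCertificate, pascal₁, pascal₂, h₂, h₁]
  field_simp
  push_cast
  ring

lemma sum_franelSummand (n : ℕ) : ∑ k ∈ range (n + 3), franelSummand n k = 0 := by
  have telescope : ∑ k ∈ range (n + 1), franelSummand n (k + 2)
      = franelCertificate n (n + 1) - franelCertificate n 0 := by
    simp only [franelSummand_add_two, sum_range_sub (franelCertificate n)]
  have certificate_last : franelCertificate n (n + 1) = 0 := by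
    simp [franelCertificate, Nat.choose_eq_zero_of_lt]
  rw [sum_range_succ', sum_range_succ', telescope, certificate_last]
  simp only [franelSummand, franelCertificate, zero_add, Nat.choose_zero_right,
    Nat.choose_one_right]
  push_cast
  ring

theorem franel_recurrence (n : ℕ) :
    ((n : ℚ) + 2) ^ 2 * franel (n + 2)
      = (7 * (n : ℚ) ^ 2 + 21 * n + 16) * franel (n + 1) + 8 * ((n : ℚ) + 1) ^ 2 * franel n := by
  have h := sum_franelSummand n
  simp only [franelSummand, sum_sub_distrib, ← mul_sum] at h
  rw [franel_eq_sum_range (le_refl (n + 3)), franel_eq_sum_range (by omega : n + 2 ≤ n + 3),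
    franel_eq_sum_range (by omega : n + 1 ≤ n + 3)]
  linear_combination h

section Operator

variable {R : Type*} [CommRing R]

noncomputable def franelOperator (f : R⟦X⟧) : R⟦X⟧ :=
  X * (X + 1) * (8 * X - 1) * d⁄dX R (d⁄dX R f) + (24 * X ^ 2 + 14 * X - 1) * d⁄dX R f
    + (8 * X + 2) * f

-- `X ^ 1` rather than `X`, so that `coeff_mul_X_pow'` applies to every term.
lemma franelOperator_eq_sum_C_mul_X_pow (f : R⟦X⟧) :
    franelOperator f = C 8 * d⁄dX R (d⁄dX R f) * X ^ 3 + C 7 * d⁄dX R (d⁄dX R f) * X ^ 2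
      - d⁄dX R (d⁄dX R f) * X ^ 1 + C 24 * d⁄dX R f * X ^ 2 + C 14 * d⁄dX R f * X ^ 1 - d⁄dX R f
      + C 8 * f * X ^ 1 + C 2 * f := by
  simp only [franelOperator, map_ofNat]
  ring

lemma coeff_zero_franelOperator (a : ℕ → R) :
    coeff 0 (franelOperator (mk a)) = 2 * a 0 - a 1 := by
  simp only [franelOperator_eq_sum_C_mul_X_pow, map_add, map_sub, coeff_mul_X_pow', coeff_C_mul,
    coeff_derivative, coeff_mk]
  norm_num
  ring

lemma coeff_succ_franelOperator (a : ℕ → R) (n : ℕ) :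
    coeff (n + 1) (franelOperator (mk a))
      = 8 * ((n : R) + 1) ^ 2 * a n + (7 * (n : R) ^ 2 + 21 * n + 16) * a (n + 1)
        - ((n : R) + 2) ^ 2 * a (n + 2) := by
  simp only [franelOperator_eq_sum_C_mul_X_pow, map_add, map_sub, coeff_mul_X_pow', coeff_C_mul,
    coeff_derivative, coeff_mk]
  rcases n with _ | _ | n
  · norm_num; ring
  · norm_num; ring
  · simp only [show n + 1 + 1 + 1 - 3 = n by omega, show n + 1 + 1 + 1 - 2 = n + 1 by omega]
    norm_num
    ring

end Operator

open PowerSeries in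
theorem franel_series_ode :
    let h : PowerSeries ℚ :=
      PowerSeries.mk fun n => ∑ k ∈ Finset.range (n + 1), ((n.choose k : ℚ)) ^ 3
    X * (X + 1) * (8 * X - 1) * (derivative ℚ (derivative ℚ h))
        + (24 * X ^ 2 + 14 * X - 1) * derivative ℚ h
        + (8 * X + 2) * h = 0 := by
  change franelOperator (mk franel) = 0
  ext (_ | n)
  · rw [coeff_zero_franelOperator]
    norm_num [franel, sum_range_succ]
  · rw [coeff_succ_franelOperator, franel_recurrence, map_zero]
    ring
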